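/- Fix a finite index set ι and for each i ∈ ι a finite nonempty type α i, and consider SPNs over ι as defined inductively (Leaf, Sum with convex weights, Prod over disjoint scopes), with pd defined recursively by pd(Leaf i p) = max_{v : α i} p v, pd(Sum node) = max_j w_j · pd(S_j), pd(Prod node) = Π_j pd(S_j). Then for every SPN S there exists a configuration x : ∀ i, α i with S(x) ≥ pd(S). -/

import Mathlib

open scoped NNReal

/-- Sum-product networks over index set `ι` with variable domains `α i`, indexed by scope. -/
inductive SPN (ι : Type) (α : ι → Type) : Set ι → Type where
  | leaf (i : ι) (p : α i → ℝ≥0) : SPN ι α {i}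
  | sum {sc : Set ι} (t : ℕ) (ht : 1 ≤ t) (child : Fin t → SPN ι α sc)
      (w : Fin t → ℝ≥0) (hw : ∑ j, w j = 1) : SPN ι α sc
  | prod (t : ℕ) (scs : Fin t → Set ι)
      (hd : Pairwise fun j k => Disjoint (scs j) (scs k))
      (child : ∀ j, SPN ι α (scs j)) : SPN ι α (⋃ j, scs j)

/-- The value of an SPN at a configuration. -/
noncomputable def SPN.eval {ι : Type} {α : ι → Type} :
    {sc : Set ι} → SPN ι α sc → (∀ i, α i) → ℝ≥0
  | _, .leaf i p, x => p (x i)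
  | _, .sum _ _ child w _, x => ∑ j, w j * (child j).eval x
  | _, .prod _ _ _ child, x => ∏ j, (child j).eval x

/-- The upward pass of the max-product algorithm. -/
noncomputable def SPN.pd {ι : Type} {α : ι → Type} :
    {sc : Set ι} → SPN ι α sc → ℝ≥0
  | _, .leaf _ p => ⨆ v, p v
  | _, .sum _ _ child w _ => ⨆ j, w j * (child j).pd
  | _, .prod _ _ _ child => ∏ j, (child j).pd

/-- The product over all sum nodes of the number of their children. -/
def SPN.D {ι : Type} {α : ι → Type} :
    {sc : Set ι} → SPN ι α sc → ℕ
  | _, .leaf _ _ => 1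
  | _, .sum t _ child _ _ => t * ∏ j, (child j).D
  | _, .prod _ _ _ child => ∏ j, (child j).D

/-!
Induction on the network. At a leaf take a maximiser of `p`; at a sum node follow a child
maximising `w j * pd (S_j)`, since the weighted sum dominates each of its terms; at a product
node glue the configurations of the children, which is possible because their scopes are
disjoint and the value of an SPN only depends on the variables in its scope.
-/

theorem exists_forall_eq_of_pairwise_disjoint {ι κ : Type} {α : ι → Type}
    [∀ i, Nonempty (α i)] (s : κ → Set ι) (hd : Pairwise fun j k => Disjoint (s j) (s k))
    (xs : κ → ∀ i, α i) : ∃ x : ∀ i, α i, ∀ j, ∀ i ∈ s j, x i = xs j i := by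
  classical
  refine ⟨fun i => if h : ∃ j, i ∈ s j then xs h.choose i else Classical.arbitrary _,
    fun j i hi => ?_⟩
  have hex : ∃ k, i ∈ s k := ⟨j, hi⟩
  have hchoose : hex.choose = j := by
    by_contra hne
    exact (hd hne).ne_of_mem hex.choose_spec hi rfl
  simp only [dif_pos hex, hchoose]

namespace SPN

variable {ι : Type} {α : ι → Type}

theorem eval_congr : ∀ {sc : Set ι} (S : SPN ι α sc) {x y : ∀ i, α i},
    (∀ i ∈ sc, x i = y i) → S.eval x = S.eval y
  | _, .leaf i _, _, _, h => by simp only [eval, h i rfl]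
  | _, .sum _ _ child _ _, _, _, h => by
      simp only [eval, eval_congr (child _) h]
  | _, .prod _ _ _ child, _, _, h => by
      simp only [eval]
      exact Finset.prod_congr rfl fun j _ =>
        eval_congr (child j) fun i hi => h i (Set.mem_iUnion.2 ⟨j, hi⟩)

end SPN

open SPN in
theorem stmt13_general {ι : Type} [DecidableEq ι] {α : ι → Type}
    [∀ i, Fintype (α i)] [∀ i, Nonempty (α i)]
    {sc : Set ι} (S : SPN ι α sc) :
    ∃ x : ∀ i, α i, S.pd ≤ S.eval x := by
  induction S with
  | leaf i p =>
      obtain ⟨v, hv⟩ := Finite.exists_max p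
      refine ⟨Function.update (Classical.arbitrary _) i v, ?_⟩
      simpa only [pd, eval, Function.update_self] using ciSup_le hv
  | sum t ht child w _ ih =>
      have : Nonempty (Fin t) := ⟨⟨0, ht⟩⟩
      obtain ⟨j, hj⟩ := Finite.exists_max fun j => w j * (child j).pd
      obtain ⟨x, hx⟩ := ih j
      refine ⟨x, ?_⟩
      calc (⨆ k, w k * (child k).pd) ≤ w j * (child j).pd := ciSup_le hj
        _ ≤ w j * (child j).eval x := by gcongr
        _ ≤ ∑ k, w k * (child k).eval x :=
          Finset.single_le_sum (f := fun k => w k * (child k).eval x)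
            (fun _ _ => zero_le) (Finset.mem_univ j)
  | prod t scs hd child ih =>
      choose xs hxs using ih
      obtain ⟨x, hx⟩ := exists_forall_eq_of_pairwise_disjoint scs hd xs
      exact ⟨x, Finset.prod_le_prod' fun j _ =>
        (hxs j).trans_eq (eval_congr (child j) (hx j)).symm⟩

/-- For every SPN `S` there is a configuration `x` with `S(x) ≥ pd(S)`. -/
theorem stmt13 {ι : Type} [Fintype ι] [DecidableEq ι] {α : ι → Type}
    [∀ i, Fintype (α i)] [∀ i, Nonempty (α i)]
    {sc : Set ι} (S : SPN ι α sc) :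
    ∃ x : ∀ i, α i, S.pd ≤ S.eval x :=
  stmt13_general S
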